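/- Let V be a real inner product space, V₀ ⊆ V a subspace, and R : V₀ → ℝ a linear functional. Let Π : V₀ → V₀ be a linear map with R(Π v) = 0 for all v ∈ V₀. Let I be a finite index set and, for each i ∈ I, let Λᵢ : V₀ → V₀ be a linear map, with Σ_{i∈I} Λᵢ = id on V₀. Suppose for each i ∈ I an element eᵢ ∈ V₀ satisfies ⟪eᵢ, v⟫ = R(Λᵢ(v − Π v)) for all v ∈ V₀, and suppose e_h ∈ V₀ satisfies ⟪e_h, v⟫ = R(v) for all v ∈ V₀. Then ‖e_h‖ ≤ ‖Σ_{i∈I} eᵢ‖. -/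

import Mathlib

/-!
The sum of the patch corrections represents the residual on `V₀`: since `∑ Λᵢ = id` and `R`
vanishes on the image of `Π`, `⟪∑ eᵢ, v⟫ = R (v - Π v) = R v`. So `∑ eᵢ` and `e_h` are two
Riesz representatives of `R` inside `V₀`, hence equal, and the bound holds with equality.
-/

open scoped RealInnerProductSpace

section

variable {V : Type*} [NormedAddCommGroup V] [InnerProductSpace ℝ V] {V₀ : Submodule ℝ V}

theorem inner_sum_patch_corrections_eq {R : V₀ →ₗ[ℝ] ℝ} {Proj : V₀ →ₗ[ℝ] V₀}
    (hProj : ∀ v : V₀, R (Proj v) = 0) {ι : Type*} [Fintype ι] {Λ : ι → (V₀ →ₗ[ℝ] V₀)}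
    (hΛ : (∑ i, Λ i) = LinearMap.id) {e : ι → V₀}
    (he : ∀ i, ∀ v : V₀, ⟪(e i : V), (v : V)⟫ = R (Λ i (v - Proj v))) (v : V₀) :
    ⟪((∑ i, e i : V₀) : V), v⟫ = R v := by
  calc ⟪((∑ i, e i : V₀) : V), v⟫
      = ∑ i, R (Λ i (v - Proj v)) := by
        rw [Submodule.coe_sum, sum_inner]
        exact Finset.sum_congr rfl fun i _ => he i v
    _ = R ((∑ i, Λ i) (v - Proj v)) := by rw [LinearMap.sum_apply, map_sum]
    _ = R v := by rw [hΛ, LinearMap.id_apply, map_sub, hProj, sub_zero]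

end

/-- Abstract form of the SPET global overestimation property (26): the energy
norm of the sum of the patch corrections bounds the energy norm of the error. -/
theorem spet_overestimation {V : Type*} [NormedAddCommGroup V] [InnerProductSpace ℝ V]
    (V₀ : Submodule ℝ V) (R : V₀ →ₗ[ℝ] ℝ) (Proj : V₀ →ₗ[ℝ] V₀)
    (hProj : ∀ v : V₀, R (Proj v) = 0)
    {ι : Type*} [Fintype ι] (Λ : ι → (V₀ →ₗ[ℝ] V₀))
    (hΛ : (∑ i, Λ i) = LinearMap.id)
    (e : ι → V₀)
    (he : ∀ i, ∀ v : V₀, ⟪((e i : V)), ((v : V))⟫ = R ((Λ i) (v - Proj v)))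
    (eh : V₀) (heh : ∀ v : V₀, ⟪((eh : V)), ((v : V))⟫ = R v) :
    ‖(eh : V)‖ ≤ ‖((∑ i, e i : V₀) : V)‖ := by
  have hsum : (∑ i, e i : V₀) = eh := ext_inner_right ℝ fun v => by
    rw [Submodule.coe_inner, inner_sum_patch_corrections_eq hProj hΛ he, Submodule.coe_inner, heh]
  rw [hsum]
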